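/- An infinite binary word x is mesosome-free if and only if x or its complement has one of the following forms: 0^ω; 0^i 1^ω (i ≥ 1); 0^i 1^(2j-1) 0^ω (i, j ≥ 1); 0^i 1 0 1^ω (i ≥ 1); or (01)^ω. -/

import Mathlib

/-- `x'` is a conjugate (cyclic shift) of `x`. -/
def Conj (x x' : List Bool) : Prop := ∃ u v : List Bool, x = u ++ v ∧ x' = v ++ u

/-- A mesosome: a nonempty word of the form `x ++ x'` with `x'` a conjugate of `x`, `x' ≠ x`. -/
def Mesosome (w : List Bool) : Prop :=
  ∃ x x' : List Bool, w = x ++ x' ∧ Conj x x' ∧ x' ≠ x ∧ x ≠ []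

/-- A word is mesosome-free if no factor (contiguous subword) is a mesosome. -/
def MesosomeFree (w : List Bool) : Prop := ∀ f : List Bool, f <:+: w → ¬ Mesosome f

/-- `f` is a (finite) factor of the infinite word `s`. -/
def FactorOfInf (f : List Bool) (s : ℕ → Bool) : Prop :=
  ∃ i : ℕ, f = List.ofFn (fun k : Fin f.length => s (i + k))

/-- An infinite word is mesosome-free if none of its finite factors is a mesosome. -/
def MesosomeFreeInf (s : ℕ → Bool) : Prop := ∀ f : List Bool, FactorOfInf f s → ¬ Mesosome f

/-- The list of allowed forms for an infinite mesosome-free word starting with 0. -/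
def GoodInfForm (s : ℕ → Bool) : Prop :=
  (s = fun _ => false) ∨
  (∃ i ≥ 1, s = fun n => decide (i ≤ n)) ∨
  (∃ i ≥ 1, ∃ j ≥ 1, s = fun n => decide (i ≤ n ∧ n < i + (2 * j - 1))) ∨
  (∃ i ≥ 1, s = fun n => decide (n = i ∨ i + 2 ≤ n)) ∨
  (s = fun n => decide (n % 2 = 1))

lemma getD_append' (l1 l2 : List Bool) (k : ℕ) :
    (l1 ++ l2).getD k false = if k < l1.length then l1.getD k false else l2.getD (k - l1.length) false := by
  induction l1 generalizing k with
  | nil => simp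
  | cons a t ih =>
    cases k with
    | zero => simp
    | succ k => simpa [Nat.succ_lt_succ_iff] using ih k

lemma getD_replicate' (n k : ℕ) (c : Bool) :
    (List.replicate n c).getD k false = if k < n then c else false := by
  induction n generalizing k with
  | zero => simp
  | succ n ih =>
    cases k with
    | zero => simp [List.replicate_succ]
    | succ k => simpa [List.replicate_succ, Nat.succ_lt_succ_iff] using ih k

lemma factor_ofFn (s : ℕ → Bool) (p : ℕ) (f : List Bool)
    (h : ∀ k, (hk : k < f.length) → f.getD k false = s (p + k)) : FactorOfInf f s := by
  refine ⟨p, ?_⟩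
  apply List.ext_getElem (by simp)
  intro k h1 h2
  rw [List.getElem_ofFn]
  rw [← h k h1, List.getD_eq_getElem f false h1]

lemma no_meso {s : ℕ → Bool} (hMF : MesosomeFreeInf s) (p : ℕ) (u v : List Bool)
    (hne : u ++ v ≠ []) (hcomm : v ++ u ≠ u ++ v)
    (hw : ∀ k, (hk : k < (u ++ v ++ (v ++ u)).length) → (u ++ v ++ (v ++ u)).getD k false = s (p + k)) :
    False := by
  exact hMF _ (factor_ofFn s p _ hw) ⟨u ++ v, v ++ u, rfl, ⟨u, v, rfl, rfl⟩, hcomm, hne⟩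

lemma conj_count {x x' : List Bool} (h : Conj x x') (b : Bool) : x.count b = x'.count b := by
  obtain ⟨u, v, rfl, rfl⟩ := h
  simp [List.count_append, Nat.add_comm]

lemma conj_length {x x' : List Bool} (h : Conj x x') : x'.length = x.length := by
  obtain ⟨u, v, rfl, rfl⟩ := h
  simp [Nat.add_comm]

lemma take_of_append {x x' f : List Bool} (h : f = x ++ x') : x = f.take x.length := by
  subst h; rw [List.take_left]

lemma drop_of_append {x x' f : List Bool} (h : f = x ++ x') : x' = f.drop x.length := by
  subst h; rw [List.drop_left]

/-- constant words are not mesosomes -/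
lemma not_meso_const (m : ℕ) (c : Bool) : ¬ Mesosome (List.replicate m c) := by
  rintro ⟨x, x', heq, hconj, hne, -⟩
  have hlen : x.length + x'.length = m := by
    have := congrArg List.length heq; simpa [Nat.add_comm] using this.symm
  have hl' := conj_length hconj
  have hx : x = List.replicate x.length c := by
    have h := take_of_append heq
    rwa [List.take_replicate, Nat.min_eq_left (by omega)] at h
  have hx' : x' = List.replicate x.length c := by
    have h := drop_of_append heq
    rwa [List.drop_replicate, show m - x.length = x.length from by omega] at h
  exact hne (hx'.trans hx.symm)

/-- words with an odd count of some letter are not mesosomes -/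
lemma not_meso_odd {w : List Bool} (b : Bool) (h : w.count b % 2 = 1) : ¬ Mesosome w := by
  rintro ⟨x, x', heq, hconj, -, -⟩
  rw [heq, List.count_append, conj_count hconj b] at h
  omega

/-- two-block words are not mesosomes -/
lemma not_meso_rep2 (a b : ℕ) (c d : Bool) :
    ¬ Mesosome (List.replicate a c ++ List.replicate b d) := by
  by_cases hcd : c = d
  · subst hcd; rw [← List.replicate_add]; exact not_meso_const _ _
  rintro ⟨x, x', heq, hconj, hne, hxnil⟩
  set n := x.length with hn
  have hl' := conj_length hconj
  have hlen : a + b = n + n := by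
    have := congrArg List.length heq; simpa [hl'] using this
  have hcnt : (x ++ x').count c = a := by
    rw [← heq]; simp [List.count_append, List.count_replicate, hcd, Ne.symm hcd]
  rw [List.count_append, ← conj_count hconj c] at hcnt
  have hx := take_of_append heq
  rw [List.take_append, List.take_replicate, List.take_replicate,
    List.length_replicate, ← hn] at hx
  have hcx : x.count c = min n a := by
    rw [hx]; simp [List.count_append, List.count_replicate, hcd, Ne.symm hcd]
  rcases Nat.le_total n a with hna | han
  · have hb : b = 0 := by omega
    subst hb
    exact not_meso_const a c ⟨x, x', by simpa using heq, hconj, hne, hxnil⟩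
  · have ha : a = 0 := by omega
    subst ha
    exact not_meso_const b d ⟨x, x', by simpa using heq, hconj, hne, hxnil⟩

/-- `0^a 1 0 1^b` with `a ≥ 1` is not a mesosome. -/
lemma not_meso_M4 (a b : ℕ) (ha : 1 ≤ a) :
    ¬ Mesosome (List.replicate a false ++ true :: false :: List.replicate b true) := by
  rintro ⟨x, x', heq, hconj, hne, hxnil⟩
  set n := x.length with hn
  have hl' := conj_length hconj
  have hlen : a + (2 + b) = n + n := by
    have h := congrArg List.length heq; simp at h; omega
  have hcf : (x ++ x').count false = a + 1 := by
    rw [← heq]; simp [List.count_append, List.count_replicate, List.count_cons]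
  have hct : (x ++ x').count true = b + 1 := by
    rw [← heq]; simp [List.count_append, List.count_replicate, List.count_cons]
  rw [List.count_append, ← conj_count hconj false] at hcf
  rw [List.count_append, ← conj_count hconj true] at hct
  have hx := take_of_append heq
  rw [List.take_append, List.take_replicate, List.length_replicate, ← hn] at hx
  rcases Nat.lt_or_ge n (a+1) with hna | hna
  · -- n ≤ a : x = 0^n
    have hmin : min n a = n := by omega
    rw [hmin, show n - a = 0 from by omega] at hx
    simp only [List.take_zero, List.append_nil] at hx
    rw [hx] at hct
    simp [List.count_replicate] at hct
  rcases Nat.lt_or_ge n (a+2) with hna2 | hna2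
  · -- n = a + 1 : x = 0^a 1
    have hne' : n = a + 1 := by omega
    rw [show min n a = a from by omega, show n - a = 1 from by omega] at hx
    simp only [List.take_succ_cons, List.take_zero] at hx
    have hcfx : x.count false = a := by rw [hx]; simp [List.count_replicate]
    have ha1 : a = 1 := by omega
    have hb1 : b = 1 := by omega
    subst ha1; subst hb1
    have hxc : x = [false, true] := by simpa using hx
    have hx'c : x' = [false, true] := by
      have h := drop_of_append heq
      rw [← hn, hne'] at h
      simpa using h
    exact hne (hx'c.trans hxc.symm)
  · -- n ≥ a + 2 : x = 0^a 1 0 1^(n-a-2)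
    rw [show min n a = a from by omega,
      show n - a = (n - a - 2) + 1 + 1 from by omega] at hx
    simp only [List.take_succ_cons, List.take_replicate] at hx
    have hcfx : x.count false = a + 1 := by
      rw [hx]; simp [List.count_replicate, List.count_cons]
    omega

lemma factor_getElem {s : ℕ → Bool} {p : ℕ} {f : List Bool}
    (hf : f = List.ofFn (fun k : Fin f.length => s (p + k))) :
    ∀ k, (hk : k < f.length) → f[k] = s (p + k) := by
  intro k hk
  rw [List.getElem_of_eq hf, List.getElem_ofFn]

lemma eq_rep2_of (f : List Bool) (a b : ℕ) (x y : Bool) (hl : f.length = a + b)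
    (h : ∀ k, (hk : k < f.length) → f[k] = if k < a then x else y) :
    f = List.replicate a x ++ List.replicate b y := by
  apply List.ext_getElem (by simp [hl])
  intro k h1 h2
  rw [h k h1, ← List.getD_eq_getElem _ false h2, getD_append', getD_replicate', getD_replicate']
  simp only [List.length_replicate]
  rw [hl] at h1
  split_ifs <;> first | rfl | omega

lemma eq_rep3_of (f : List Bool) (a b c : ℕ) (x y z : Bool) (hl : f.length = a + b + c)
    (h : ∀ k, (hk : k < f.length) → f[k] = if k < a then x else if k < a + b then y else z) :
    f = List.replicate a x ++ (List.replicate b y ++ List.replicate c z) := by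
  apply List.ext_getElem (by simp [hl]; omega)
  intro k h1 h2
  rw [h k h1, ← List.getD_eq_getElem _ false h2, getD_append', getD_append',
    getD_replicate', getD_replicate', getD_replicate']
  simp only [List.length_replicate]
  rw [hl] at h1
  split_ifs <;> first | rfl | omega

lemma eq_rep4_of (f : List Bool) (a b c d : ℕ) (x y z w : Bool) (hl : f.length = a + b + c + d)
    (h : ∀ k, (hk : k < f.length) →
      f[k] = if k < a then x else if k < a + b then y else if k < a + b + c then z else w) :
    f = List.replicate a x ++ (List.replicate b y ++ (List.replicate c z ++ List.replicate d w)) := by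
  apply List.ext_getElem (by simp [hl]; omega)
  intro k h1 h2
  rw [h k h1, ← List.getD_eq_getElem _ false h2, getD_append', getD_append', getD_append',
    getD_replicate', getD_replicate', getD_replicate', getD_replicate']
  simp only [List.length_replicate]
  rw [hl] at h1
  split_ifs <;> first | rfl | omega

lemma count_parity (p n : ℕ) :
    (List.ofFn (fun k : Fin n => decide ((p + k) % 2 = 1))).count true = (p + n)/2 - p/2 := by
  induction n with
  | zero => simp
  | succ n ih =>
    rw [List.ofFn_succ']
    simp only [List.concat_eq_append, List.count_append, Fin.coe_castSucc, Fin.val_last]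
    rw [ih]
    rcases Nat.lt_or_ge ((p + n) % 2) 1 with h | h
    · simp only [List.count_singleton]
      have : decide ((p + n) % 2 = 1) = false := by simp; omega
      rw [this]
      simp; omega
    · have : decide ((p + n) % 2 = 1) = true := by simp; omega
      rw [this]
      simp; omega

lemma mf_form1 : MesosomeFreeInf (fun _ => false) := by
  rintro f ⟨p, hf⟩ hm
  have key := factor_getElem (s := fun _ => false) (p := p) hf
  have hs : f = List.replicate f.length false ++ List.replicate 0 false :=
    eq_rep2_of f f.length 0 false false (by omega)
      (fun k hk => by rw [key k hk]; split_ifs <;> rfl)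
  simp only [List.replicate_zero, List.append_nil] at hs
  exact not_meso_const _ _ (hs ▸ hm)

lemma mf_form2 (i : ℕ) : MesosomeFreeInf (fun n => decide (i ≤ n)) := by
  rintro f ⟨p, hf⟩ hm
  have key := factor_getElem (s := fun n => decide (i ≤ n)) (p := p) hf
  set L := f.length with hL
  have hs : f = List.replicate (min L (i - p)) false ++ List.replicate (L - min L (i - p)) true :=
    eq_rep2_of f _ _ false true (by omega)
      (fun k hk => by
        rw [key k hk]
        split_ifs with h
        · simp only [decide_eq_false_iff_not]; omega
        · simp only [decide_eq_true_eq]; omega)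
  exact not_meso_rep2 _ _ _ _ (hs ▸ hm)

lemma mf_form3 (i j : ℕ) (hj : 1 ≤ j) :
    MesosomeFreeInf (fun n => decide (i ≤ n ∧ n < i + (2 * j - 1))) := by
  rintro f ⟨p, hf⟩ hm
  have key := factor_getElem (s := fun n => decide (i ≤ n ∧ n < i + (2 * j - 1))) (p := p) hf
  set L := f.length with hL
  set B := 2 * j - 1 with hB
  rcases le_or_gt i p with h1 | h1
  · have hs : f = List.replicate (min L (i + B - p)) true ++ List.replicate (L - min L (i + B - p)) false :=
      eq_rep2_of f _ _ true false (by omega)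
        (fun k hk => by
          rw [key k hk]
          split_ifs with h
          · simp only [decide_eq_true_eq]; omega
          · simp only [decide_eq_false_iff_not]; omega)
    exact not_meso_rep2 _ _ _ _ (hs ▸ hm)
  rcases le_or_gt (p + L) (i + B) with h2 | h2
  · have hs : f = List.replicate (min L (i - p)) false ++ List.replicate (L - min L (i - p)) true :=
      eq_rep2_of f _ _ false true (by omega)
        (fun k hk => by
          rw [key k hk]
          split_ifs with h
          · simp only [decide_eq_false_iff_not]; omega
          · simp only [decide_eq_true_eq]; omega)
    exact not_meso_rep2 _ _ _ _ (hs ▸ hm)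
  · have hs : f = List.replicate (i - p) false ++
        (List.replicate B true ++ List.replicate (L - (i - p) - B) false) :=
      eq_rep3_of f _ _ _ false true false (by omega)
        (fun k hk => by
          rw [key k hk]
          split_ifs with h h'
          · simp only [decide_eq_false_iff_not]; omega
          · simp only [decide_eq_true_eq]; omega
          · simp only [decide_eq_false_iff_not]; omega)
    refine not_meso_odd true ?_ hm
    rw [hs]
    simp [List.count_replicate]
    omega

lemma mf_form4 (i : ℕ) : MesosomeFreeInf (fun n => decide (n = i ∨ i + 2 ≤ n)) := by
  rintro f ⟨p, hf⟩ hm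
  have key := factor_getElem (s := fun n => decide (n = i ∨ i + 2 ≤ n)) (p := p) hf
  set L := f.length with hL
  rcases le_or_gt (i + 1) p with h1 | h1
  · have hs : f = List.replicate (min L (i + 2 - p)) false ++ List.replicate (L - min L (i + 2 - p)) true :=
      eq_rep2_of f _ _ false true (by omega)
        (fun k hk => by
          rw [key k hk]
          split_ifs with h
          · simp only [decide_eq_false_iff_not]; omega
          · simp only [decide_eq_true_eq]; omega)
    exact not_meso_rep2 _ _ _ _ (hs ▸ hm)
  rcases le_or_gt (p + L) (i + 2) with h2 | h2
  · rcases le_or_gt (p + L) i with h3 | h3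
    · have hs : f = List.replicate L false ++ List.replicate 0 false :=
        eq_rep2_of f _ _ false false (by omega)
          (fun k hk => by
            rw [key k hk]
            split_ifs <;> · simp only [decide_eq_false_iff_not]; omega)
      simp only [List.replicate_zero, List.append_nil] at hs
      exact not_meso_const _ _ (hs ▸ hm)
    · have hs : f = List.replicate (i - p) false ++
          (List.replicate 1 true ++ List.replicate (L - (i - p) - 1) false) :=
        eq_rep3_of f _ _ _ false true false (by omega)
          (fun k hk => by
            rw [key k hk]
            split_ifs with h h'
            · simp only [decide_eq_false_iff_not]; omega
            · simp only [decide_eq_true_eq]; omega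
            · simp only [decide_eq_false_iff_not]; omega)
      refine not_meso_odd true ?_ hm
      rw [hs]; simp [List.count_replicate]
  · -- p ≤ i and p + L ≥ i + 3
    have hs : f = List.replicate (i - p) false ++
        (List.replicate 1 true ++ (List.replicate 1 false ++ List.replicate (L - (i - p) - 2) true)) :=
      eq_rep4_of f _ _ _ _ false true false true (by omega)
        (fun k hk => by
          rw [key k hk]
          split_ifs with h h' h''
          · simp only [decide_eq_false_iff_not]; omega
          · simp only [decide_eq_true_eq]; omega
          · simp only [decide_eq_false_iff_not]; omega
          · simp only [decide_eq_true_eq]; omega)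
    rcases Nat.eq_zero_or_pos (i - p) with h0 | h0
    · refine not_meso_odd false ?_ hm
      rw [hs]; simp [List.count_replicate, h0]
    · rw [hs] at hm
      simp only [List.replicate_one, List.singleton_append] at hm
      exact not_meso_M4 (i - p) _ h0 hm

lemma mf_form5 : MesosomeFreeInf (fun n => decide (n % 2 = 1)) := by
  rintro f ⟨p, hf⟩ ⟨x, x', heq, hconj, hne, hxnil⟩
  have key := factor_getElem (s := fun n => decide (n % 2 = 1)) (p := p) hf
  have hfD : ∀ k, k < f.length → f.getD k false = decide ((p + k) % 2 = 1) := fun k hk => by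
    rw [List.getD_eq_getElem f false hk]; exact key k hk
  set n := x.length with hn
  have hl' := conj_length hconj
  have hlen : f.length = n + n := by
    have := congrArg List.length heq; simp at this; omega
  have hxD : ∀ k, k < n → x.getD k false = decide ((p + k) % 2 = 1) := fun k hk => by
    rw [← hfD k (by omega), heq, getD_append', if_pos (by omega)]
  have hx'D : ∀ k, k < n → x'.getD k false = decide ((p + n + k) % 2 = 1) := fun k hk => by
    have h1 := hfD (n + k) (by omega)
    rw [heq, getD_append', if_neg (by omega), show n + k - x.length = k from by omega] at h1
    rw [h1]; exact decide_eq_decide.mpr (by omega)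
  rcases Nat.even_or_odd n with he | ho
  · apply hne
    apply List.ext_getElem (by omega)
    intro k h1 h2
    rw [← List.getD_eq_getElem x' false h1, ← List.getD_eq_getElem x false h2,
      hx'D k (by omega), hxD k (by omega)]
    rcases he with ⟨t, ht⟩
    exact decide_eq_decide.mpr (by omega)
  · have hx : x = List.ofFn (fun k : Fin n => decide ((p + k) % 2 = 1)) := by
      apply List.ext_getElem (by simp [hn])
      intro k h1 h2
      rw [List.getElem_ofFn, ← List.getD_eq_getElem x false h1, hxD k (by omega)]
    have hx' : x' = List.ofFn (fun k : Fin n => decide ((p + n + k) % 2 = 1)) := by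
      apply List.ext_getElem (by simp; omega)
      intro k h1 h2
      rw [List.getElem_ofFn, ← List.getD_eq_getElem x' false h1, hx'D k (by omega)]
    have hc := conj_count hconj true
    rw [hx, hx', count_parity, count_parity] at hc
    rcases ho with ⟨t, ht⟩
    omega

lemma mf_compl {s : ℕ → Bool} (h : MesosomeFreeInf s) : MesosomeFreeInf (fun n => !(s n)) := by
  rintro f ⟨p, hf⟩ ⟨x, x', heq, ⟨u, v, hu, hv⟩, hne, hxnil⟩
  refine h (f.map (fun b => !b)) ⟨p, ?_⟩
    ⟨x.map (fun b => !b), x'.map (fun b => !b), by rw [heq, List.map_append],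
     ⟨u.map (fun b => !b), v.map (fun b => !b), by rw [hu, List.map_append],
      by rw [hv, List.map_append]⟩, ?_, by simp [hxnil]⟩
  · apply List.ext_getElem (by simp)
    intro k h1 h2
    rw [List.getElem_ofFn]
    simp only [List.getElem_map]
    rw [List.getElem_of_eq hf (by simpa using h1), List.getElem_ofFn]
    simp
  · intro hmap
    apply hne
    have := congrArg (List.map (fun b => !b)) hmap
    simpa [List.map_map, Function.comp_def, Bool.not_not] using this

lemma bool_eq_false {b : Bool} (h : ¬ b = true) : b = false := by
  cases b <;> simp_all

lemma bool_eq_true {b : Bool} (h : ¬ b = false) : b = true := by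
  cases b <;> simp_all

set_option maxHeartbeats 2000000 in
lemma main_forward (s : ℕ → Bool) (hMF : MesosomeFreeInf s) (h0 : s 0 = false) :
    GoodInfForm s := by
  by_cases hT : ∃ n, s n = true
  case neg =>
    left
    funext n
    exact bool_eq_false (fun h => hT ⟨n, h⟩)
  set i := Nat.find hT with hidef
  have hi : s i = true := Nat.find_spec hT
  have hlt : ∀ t, t < i → s t = false := fun t ht => bool_eq_false (Nat.find_min hT ht)
  have hi1 : 1 ≤ i := by
    rcases Nat.eq_zero_or_pos i with h | h
    · rw [h] at hi; rw [h0] at hi; exact absurd hi (by simp)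
    · exact h
  by_cases hM : ∃ t, i ≤ t ∧ s t = false
  case neg =>
    right; left
    refine ⟨i, hi1, funext fun n => ?_⟩
    rcases Nat.lt_or_ge n i with h | h
    · rw [hlt n h]; simp; omega
    · have : s n = true := by
        by_contra hc
        exact hM ⟨n, h, bool_eq_false hc⟩
      rw [this]; simp; omega
  set m := Nat.find hM with hmdef
  have hm : i ≤ m ∧ s m = false := Nat.find_spec hM
  have hmid : ∀ t, i ≤ t → t < m → s t = true := fun t h1 h2 => by
    by_contra hc
    exact Nat.find_min hM h2 ⟨h1, bool_eq_false hc⟩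
  have hmi : i < m := by
    rcases Nat.lt_or_ge i m with h | h
    · exact h
    · exfalso
      have : m = i := by omega
      rw [this, hi] at hm
      exact absurd hm.2 (by simp)
  have hsm : ∀ q, q = m → s q = false := fun q hq => hq ▸ hm.2
  have hsi : ∀ q, q = i → s q = true := fun q hq => hq ▸ hi
  -- L := m - i is odd
  have hLodd : (m - i) % 2 = 1 := by
    by_contra hev
    obtain ⟨k, hk, hk1⟩ : ∃ k, m - i = 2 * k ∧ 1 ≤ k := ⟨(m - i) / 2, by omega⟩
    apply no_meso hMF (i - 1) (List.replicate 1 false) (List.replicate k true) (by simp)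
    · intro hE
      have h1 := congrArg (fun l => l.getD 0 false) hE
      simp only [getD_append', getD_replicate', List.length_replicate] at h1
      split_ifs at h1 <;> first | exact Bool.noConfusion h1 | omega
    · intro t ht
      simp only [List.length_append, List.length_replicate] at ht
      simp only [getD_append', getD_replicate', List.length_append, List.length_replicate]
      split_ifs <;> symm <;>
        first
          | exact hlt _ (by omega)
          | exact hmid _ (by omega) (by omega)
          | exact hsm _ (by omega)
          | omega
  by_cases hN2 : ∃ t, m ≤ t ∧ s t = true
  case neg =>
    right; right; left
    refine ⟨i, hi1, (m - i + 1) / 2, by omega, funext fun n => ?_⟩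
    have h2j : i + (2 * ((m - i + 1) / 2) - 1) = m := by omega
    rw [h2j]
    rcases Nat.lt_or_ge n i with h | h
    · rw [hlt n h]; simp; omega
    · rcases Nat.lt_or_ge n m with h2 | h2
      · rw [hmid n h h2]; simp; omega
      · have : s n = false := by
          by_contra hc
          exact hN2 ⟨n, h2, bool_eq_true hc⟩
        rw [this]; simp; omega
  set p := Nat.find hN2 with hpdef
  have hp : m ≤ p ∧ s p = true := Nat.find_spec hN2
  have hmid2 : ∀ t, m ≤ t → t < p → s t = false := fun t h1 h2 => by
    by_contra hc
    exact Nat.find_min hN2 h2 ⟨h1, bool_eq_true hc⟩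
  have hmp : m < p := by
    rcases Nat.lt_or_ge m p with h | h
    · exact h
    · exfalso
      have : p = m := by omega
      rw [this, hm.2] at hp
      exact absurd hp.2 (by simp)
  have hsp : ∀ q, q = p → s q = true := fun q hq => hq ▸ hp.2
  -- M := p - m is odd
  have hModd : (p - m) % 2 = 1 := by
    by_contra hev
    obtain ⟨k, hk, hk1⟩ : ∃ k, p - m = 2 * k ∧ 1 ≤ k := ⟨(p - m) / 2, by omega⟩
    apply no_meso hMF (m - 1) (List.replicate 1 true) (List.replicate k false) (by simp)
    · intro hE
      have h1 := congrArg (fun l => l.getD 0 false) hE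
      simp only [getD_append', getD_replicate', List.length_replicate] at h1
      split_ifs at h1 <;> first | exact Bool.noConfusion h1 | omega
    · intro t ht
      simp only [List.length_append, List.length_replicate] at ht
      simp only [getD_append', getD_replicate', List.length_append, List.length_replicate]
      split_ifs <;> symm <;>
        first
          | exact hmid _ (by omega) (by omega)
          | exact hmid2 _ (by omega) (by omega)
          | exact hsp _ (by omega)
  -- rule out p - m ≥ 3 (i.e. M ≥ 3)
  have hM1 : p = m + 1 := by
    by_contra hne1
    obtain ⟨g, hg, hg1⟩ : ∃ g, p - m = 2 * g + 1 ∧ 1 ≤ g := ⟨(p - m) / 2, by omega⟩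
    by_cases hNL : ∀ t, t < m - i → s (p + t) = true
    · -- mesosome 0 1^L 0^M 1^L at i - 1
      have hNL' : ∀ q, p ≤ q → q < p + (m - i) → s q = true := fun q h1 h2 => by
        have := hNL (q - p) (by omega)
        rwa [show p + (q - p) = q from by omega] at this
      apply no_meso hMF (i - 1)
        (List.replicate 1 false ++ List.replicate (m - i) true) (List.replicate g false)
        (by simp)
      · intro hE
        have h1 := congrArg (fun l => l.getD 1 false) hE
        simp only [getD_append', getD_replicate', List.length_append, List.length_replicate] at h1
        split_ifs at h1 <;> first | exact Bool.noConfusion h1 | omega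
      · intro t ht
        simp only [List.length_append, List.length_replicate] at ht
        simp only [getD_append', getD_replicate', List.length_append, List.length_replicate]
        split_ifs <;> symm <;>
          first
            | exact hlt _ (by omega)
            | exact hmid _ (by omega) (by omega)
            | exact hmid2 _ (by omega) (by omega)
            | exact hNL' _ (by omega) (by omega)
    · -- some position in [p, p + L) is false; N := first false after p, N < L
      push_neg at hNL
      obtain ⟨t0, ht0, ht0f⟩ := hNL
      have hNex : ∃ t, s (p + t) = false := ⟨t0, bool_eq_false ht0f⟩
      set N := Nat.find hNex with hNdef
      have hNspec : s (p + N) = false := Nat.find_spec hNex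
      have hNmin : ∀ q, p ≤ q → q < p + N → s q = true := fun q h1 h2 => by
        have := Nat.find_min hNex (show q - p < N from by omega)
        have h3 := bool_eq_true this
        rwa [show p + (q - p) = q from by omega] at h3
      have hNlt : N < m - i := by
        have := Nat.find_min' hNex (bool_eq_false ht0f)
        omega
      have hN1 : 1 ≤ N := by
        rcases Nat.eq_zero_or_pos N with h | h
        · exfalso
          rw [h, Nat.add_zero] at hNspec
          rw [hNspec] at hp
          exact absurd hp.2 (by simp)
        · exact h
      have hspN : ∀ q, q = p + N → s q = false := fun q hq => hq ▸ hNspec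
      -- mesosome 1^N 0^M 1^N 0 at m - N
      apply no_meso hMF (m - N)
        (List.replicate N true ++ List.replicate 1 false) (List.replicate g false)
        (by simp)
      · intro hE
        have h1 := congrArg (fun l => l.getD 0 false) hE
        simp only [getD_append', getD_replicate', List.length_append, List.length_replicate] at h1
        split_ifs at h1 <;> first | exact Bool.noConfusion h1 | omega
      · intro t ht
        simp only [List.length_append, List.length_replicate] at ht
        simp only [getD_append', getD_replicate', List.length_append, List.length_replicate]
        split_ifs <;> symm <;>
          first
            | exact hmid _ (by omega) (by omega)
            | exact hmid2 _ (by omega) (by omega)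
            | exact hNmin _ (by omega) (by omega)
            | exact hspN _ (by omega)
  -- rule out m - i ≥ 3 (i.e. L ≥ 3) : mesosome 0 1^L 0 1 at i - 1
  have hL1 : m = i + 1 := by
    by_contra hne1
    obtain ⟨g, hg, hg1⟩ : ∃ g, m - i = 2 * g + 1 ∧ 1 ≤ g := ⟨(m - i) / 2, by omega⟩
    apply no_meso hMF (i - 1)
      (List.replicate 1 false ++ List.replicate 1 true) (List.replicate g true)
      (by simp)
    · intro hE
      have h1 := congrArg (fun l => l.getD 0 false) hE
      simp only [getD_append', getD_replicate', List.length_append, List.length_replicate] at h1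
      split_ifs at h1 <;> first | exact Bool.noConfusion h1 | omega
    · intro t ht
      simp only [List.length_append, List.length_replicate] at ht
      simp only [getD_append', getD_replicate', List.length_append, List.length_replicate]
      split_ifs <;> symm <;>
        first
          | exact hlt _ (by omega)
          | exact hmid _ (by omega) (by omega)
          | exact hsm _ (by omega)
          | exact hsp _ (by omega)
  -- now m = i + 1, p = i + 2
  by_cases hT2 : ∀ t, s (p + t) = true
  case pos =>
    right; right; right; left
    refine ⟨i, hi1, funext fun n => ?_⟩
    rcases Nat.lt_or_ge n i with h | h
    · rw [hlt n h]; simp; omega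
    · rcases Nat.lt_or_ge n (i + 2) with h2 | h2
      · rcases Nat.eq_or_lt_of_le h with h3 | h3
        · rw [← h3, hi]; simp
        · have : n = i + 1 := by omega
          rw [this, show i + 1 = m from by omega, hm.2]; simp; omega
      · have := hT2 (n - p)
        rw [show p + (n - p) = n from by omega] at this
        rw [this]; simp; omega
  -- N := first false after p
  push_neg at hT2
  obtain ⟨t0, ht0f⟩ := hT2
  have hNex : ∃ t, s (p + t) = false := ⟨t0, bool_eq_false ht0f⟩
  set N := Nat.find hNex with hNdef
  have hNspec : s (p + N) = false := Nat.find_spec hNex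
  have hNmin : ∀ q, p ≤ q → q < p + N → s q = true := fun q h1 h2 => by
    have := Nat.find_min hNex (show q - p < N from by omega)
    have h3 := bool_eq_true this
    rwa [show p + (q - p) = q from by omega] at h3
  have hN1 : 1 ≤ N := by
    rcases Nat.eq_zero_or_pos N with h | h
    · exfalso
      rw [h, Nat.add_zero] at hNspec
      rw [hNspec] at hp
      exact absurd hp.2 (by simp)
    · exact h
  have hspN : ∀ q, q = p + N → s q = false := fun q hq => hq ▸ hNspec
  -- N is odd : else mesosome 0 1^N 0 at p - 1
  have hNodd : N % 2 = 1 := by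
    by_contra hev
    obtain ⟨k, hk, hk1⟩ : ∃ k, N = 2 * k ∧ 1 ≤ k := ⟨N / 2, by omega⟩
    apply no_meso hMF (p - 1) (List.replicate 1 false) (List.replicate k true) (by simp)
    · intro hE
      have h1 := congrArg (fun l => l.getD 0 false) hE
      simp only [getD_append', getD_replicate', List.length_replicate] at h1
      split_ifs at h1 <;> first | exact Bool.noConfusion h1 | omega
    · intro t ht
      simp only [List.length_append, List.length_replicate] at ht
      simp only [getD_append', getD_replicate', List.length_append, List.length_replicate]
      split_ifs <;> symm <;>
        first
          | exact hsm _ (by omega)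
          | exact hNmin _ (by omega) (by omega)
          | exact hspN _ (by omega)
  -- N = 1 : else mesosome 1 0 1^N 0 at i
  have hNone : N = 1 := by
    by_contra hne1
    obtain ⟨g, hg, hg1⟩ : ∃ g, N = 2 * g + 1 ∧ 1 ≤ g := ⟨N / 2, by omega⟩
    apply no_meso hMF i
      (List.replicate 1 true ++ List.replicate 1 false) (List.replicate g true)
      (by simp)
    · intro hE
      have h1 := congrArg (fun l => l.getD 1 false) hE
      simp only [getD_append', getD_replicate', List.length_append, List.length_replicate] at h1
      split_ifs at h1 <;> first | exact Bool.noConfusion h1 | omega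
    · intro t ht
      simp only [List.length_append, List.length_replicate] at ht
      simp only [getD_append', getD_replicate', List.length_append, List.length_replicate]
      split_ifs <;> symm <;>
        first
          | exact hsi _ (by omega)
          | exact hsm _ (by omega)
          | exact hNmin _ (by omega) (by omega)
          | exact hspN _ (by omega)
  -- i = 1 : else mesosome 0 0 1 0 1 0 at i - 2
  have hione : i = 1 := by
    by_contra hne1
    have hi2 : 2 ≤ i := by omega
    apply no_meso hMF (i - 2)
      (List.replicate 1 false) (List.replicate 1 false ++ List.replicate 1 true)
      (by simp)
    · intro hE
      have h1 := congrArg (fun l => l.getD 1 false) hE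
      simp only [getD_append', getD_replicate', List.length_append, List.length_replicate] at h1
      split_ifs at h1 <;> first | exact Bool.noConfusion h1 | omega
    · intro t ht
      simp only [List.length_append, List.length_replicate] at ht
      simp only [getD_append', getD_replicate', List.length_append, List.length_replicate]
      split_ifs <;> symm <;>
        first
          | exact hlt _ (by omega)
          | exact hsi _ (by omega)
          | exact hsm _ (by omega)
          | exact hsp _ (by omega)
          | exact hspN _ (by omega)
  -- the word is the alternating word
  right; right; right; right
  have hall : ∀ n, s n = decide (n % 2 = 1) := by
    intro n
    induction n using Nat.strong_induction_on with
    | _ n ih =>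
      rcases Nat.lt_or_ge n 5 with h5 | h5
      · interval_cases n
        · rw [h0]; simp
        · rw [hsi 1 (by omega)]; simp
        · rw [hsm 2 (by omega)]; simp
        · rw [hsp 3 (by omega)]; simp
        · rw [hspN 4 (by omega)]; simp
      · by_cases hpar : n % 2 = 1
        · have hsn : s n = true := by
            by_contra hc
            have hsn : s n = false := bool_eq_false hc
            apply no_meso hMF (n - 5)
              (List.replicate 1 false) (List.replicate 1 true ++ List.replicate 1 false)
              (by simp)
            · intro hE
              have h1 := congrArg (fun l => l.getD 0 false) hE
              simp only [getD_append', getD_replicate', List.length_append,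
                List.length_replicate] at h1
              split_ifs at h1 <;> first | exact Bool.noConfusion h1 | omega
            · intro t ht
              simp only [List.length_append, List.length_replicate] at ht
              simp only [getD_append', getD_replicate', List.length_append,
                List.length_replicate]
              split_ifs <;> symm <;>
                first
                  | (rw [show n - 5 + t = n from by omega]; exact hsn)
                  | (rw [ih _ (by omega)]; simp only [decide_eq_true_eq]; omega)
                  | (rw [ih _ (by omega)]; simp only [decide_eq_false_iff_not]; omega)
          rw [hsn]; symm; simp only [decide_eq_true_eq]; omega
        · have hsn : s n = false := by
            by_contra hc
            have hsn : s n = true := bool_eq_true hc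
            apply no_meso hMF (n - 5)
              (List.replicate 1 true) (List.replicate 1 false ++ List.replicate 1 true)
              (by simp)
            · intro hE
              have h1 := congrArg (fun l => l.getD 0 false) hE
              simp only [getD_append', getD_replicate', List.length_append,
                List.length_replicate] at h1
              split_ifs at h1 <;> first | exact Bool.noConfusion h1 | omega
            · intro t ht
              simp only [List.length_append, List.length_replicate] at ht
              simp only [getD_append', getD_replicate', List.length_append,
                List.length_replicate]
              split_ifs <;> symm <;>
                first
                  | (rw [show n - 5 + t = n from by omega]; exact hsn)
                  | (rw [ih _ (by omega)]; simp only [decide_eq_true_eq]; omega)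
                  | (rw [ih _ (by omega)]; simp only [decide_eq_false_iff_not]; omega)
          rw [hsn]; symm; simp only [decide_eq_false_iff_not]; omega
  exact funext hall

theorem stmt17 (s : ℕ → Bool) :
    MesosomeFreeInf s ↔ GoodInfForm s ∨ GoodInfForm (fun n => ! s n) := by
  constructor
  · intro hMF
    cases hs0 : s 0 with
    | false => exact Or.inl (main_forward s hMF hs0)
    | true => exact Or.inr (main_forward _ (mf_compl hMF) (by simp [hs0]))
  · have key : ∀ s' : ℕ → Bool, GoodInfForm s' → MesosomeFreeInf s' := by
      rintro s' (rfl | ⟨i, hi, rfl⟩ | ⟨i, hi, j, hj, rfl⟩ | ⟨i, hi, rfl⟩ | rfl)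
      · exact mf_form1
      · exact mf_form2 i
      · exact mf_form3 i j hj
      · exact mf_form4 i
      · exact mf_form5
    rintro (h | h)
    · exact key s h
    · have h2 := mf_compl (key _ h)
      simp only [Bool.not_not] at h2
      exact h2
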